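/- arXiv:2304.12049 — 2 statements merged into one kernel-verified Lean document; each statement's English description precedes it below -/
import Mathlib

section
/- Let k ≥ 2 and δ ≥ 0 be integers and let n ≥ (k+1)δ+1. Then the graph K_δ ∨ (K_{n−kδ−δ−1} + (kδ+1)K_1) has no {K_{1,1}, K_{1,2}, …, K_{1,k}}-factor. -/
open scoped Classical
open Finset

/-- The spectral radius of a finite simple graph: the largest eigenvalue (as the
supremum of the set of real eigenvalues) of its adjacency matrix over `ℝ`. -/
noncomputable def specRad {V : Type*} [Fintype V] [DecidableEq V] (G : SimpleGraph V) : ℝ :=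
  sSup {x : ℝ | Module.End.HasEigenvalue
    (Matrix.toLin' (Matrix.of fun i j => if G.Adj i j then (1 : ℝ) else 0)) x}

/-- The graph `K_a ∨ (K_b + c·K_1)`: a clique of size `a` joined to the disjoint
union of a clique of size `b` and `c` isolated vertices. -/
def jGraph (a b c : ℕ) : SimpleGraph (Fin (a + b + c)) :=
  SimpleGraph.fromRel (fun x y => (x : ℕ) < a ∨ ((x : ℕ) < a + b ∧ (y : ℕ) < a + b))

/-- `f` is a fractional matching of `G`: `0 ≤ f e ≤ 1` on edges and the sum of `f`
over the edges incident with any vertex is at most `1`. -/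
def IsFracMatching {V : Type*} [Fintype V] [DecidableEq V] (G : SimpleGraph V)
    (f : Sym2 V → ℝ) : Prop :=
  (∀ e ∈ G.edgeFinset, 0 ≤ f e ∧ f e ≤ 1) ∧
    ∀ v : V, ∑ e ∈ G.edgeFinset, (if v ∈ e then f e else 0) ≤ 1

/-- The fractional matching number `μ_f(G)`. -/
noncomputable def fracNu {V : Type*} [Fintype V] [DecidableEq V] (G : SimpleGraph V) : ℝ :=
  sSup {x : ℝ | ∃ f : Sym2 V → ℝ, IsFracMatching G f ∧ x = ∑ e ∈ G.edgeFinset, f e}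

/-- `i(G - S)`: the number of isolated vertices of the graph obtained from `G` by
deleting the vertices of `S`. -/
noncomputable def isoCount {V : Type*} [Fintype V] (G : SimpleGraph V) (S : Finset V) : ℕ :=
  (Finset.univ.filter (fun v => v ∉ S ∧ ∀ u, G.Adj v u → u ∈ S)).card

/-- `G` has a spanning subgraph each of whose connected components is isomorphic
either to `K_2` or to a cycle `C_m` with `m ≥ 3`. -/
def HasK2CycleFactor {V : Type*} (G : SimpleGraph V) : Prop :=
  ∃ H : SimpleGraph V, H ≤ G ∧ ∀ c : H.ConnectedComponent,
    Nonempty (H.induce c.supp ≃g (⊤ : SimpleGraph (Fin 2))) ∨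
      ∃ m : ℕ, 3 ≤ m ∧ Nonempty (H.induce c.supp ≃g SimpleGraph.cycleGraph m)

/-- `G` has a `{K_{1,1}, K_{1,2}, …, K_{1,k}}`-factor: a spanning subgraph each of
whose connected components is a star with between `1` and `k` leaves. -/
def HasStarFactor {V : Type*} (k : ℕ) (G : SimpleGraph V) : Prop :=
  ∃ H : SimpleGraph V, H ≤ G ∧ ∀ c : H.ConnectedComponent,
    ∃ j : ℕ, 1 ≤ j ∧ j ≤ k ∧
      Nonempty (H.induce c.supp ≃g completeBipartiteGraph (Fin 1) (Fin j))

/-- The spectral radius of a real square matrix: the supremum of the moduli of its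
complex eigenvalues. -/
noncomputable def matSpecRad {n : ℕ} (A : Matrix (Fin n) (Fin n) ℝ) : ℝ :=
  sSup {r : ℝ | ∃ μ : ℂ,
    Module.End.HasEigenvalue (Matrix.toLin' (A.map (Complex.ofReal : ℝ → ℂ))) μ ∧
    r = ‖μ‖}

/-!
In a star factor `H` every vertex has `H`-degree between `1` and `k`. In `K_a ∨ (K_b + c K_1)` each
of the `c` vertices of `c K_1` is adjacent only to the `a` vertices of `K_a`, so it has an
`H`-neighbour there, and each of those `a` vertices serves at most `k` of them. Hence `c ≤ k a`,
which fails for `a = δ`, `c = kδ + 1`.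
-/

namespace SimpleGraph

variable {V W : Type*} [Fintype V] [Fintype W]

theorem degree_completeBipartiteGraph_inl (v : V) :
    (completeBipartiteGraph V W).degree (.inl v) = Fintype.card W := by
  rw [← card_neighborFinset_eq_degree,
    show (completeBipartiteGraph V W).neighborFinset (.inl v) = univ.map .inr by
      ext (_ | _) <;> simp]
  simp

theorem degree_completeBipartiteGraph_inr (w : W) :
    (completeBipartiteGraph V W).degree (.inr w) = Fintype.card V := by
  rw [← card_neighborFinset_eq_degree,
    show (completeBipartiteGraph V W).neighborFinset (.inr w) = univ.map .inl by
      ext (_ | _) <;> simp]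
  simp

theorem degree_induce_connectedComponent_supp {H : SimpleGraph V} (c : H.ConnectedComponent)
    (v : c.supp) : (H.induce c.supp).degree v = H.degree v :=
  degree_induce_of_neighborSet_subset fun _ ↦ c.mem_supp_of_adj_mem_supp v.2

theorem card_le_mul_card_of_forall_exists_adj (H : SimpleGraph V) {I S : Finset V} {k : ℕ}
    (hI : ∀ v ∈ I, ∃ s ∈ S, H.Adj v s) (hS : ∀ s ∈ S, H.degree s ≤ k) : #I ≤ k * #S := by
  have h := card_mul_le_card_mul H.Adj (m := 1) (n := k)
    (fun v hv ↦ by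
      obtain ⟨s, hs, hvs⟩ := hI v hv
      exact one_le_card.2 ⟨s, (mem_bipartiteAbove _).2 ⟨hs, hvs⟩⟩)
    (fun s hs ↦ (card_le_card fun v hv ↦ by
      simpa using ((mem_bipartiteBelow _).1 hv).2.symm).trans (hS s hs))
  rwa [mul_one, mul_comm] at h

end SimpleGraph

open SimpleGraph

theorem HasStarFactor.exists_le_forall_degree_mem_Icc {V : Type*} [Fintype V] {k : ℕ}
    {G : SimpleGraph V} (h : HasStarFactor k G) :
    ∃ H ≤ G, ∀ v, H.degree v ∈ Set.Icc 1 k := by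
  obtain ⟨H, hHG, hcomp⟩ := h
  refine ⟨H, hHG, fun v ↦ ?_⟩
  obtain ⟨j, hj, hjk, ⟨e⟩⟩ := hcomp (H.connectedComponentMk v)
  have hv : v ∈ (H.connectedComponentMk v).supp := rfl
  rw [← degree_induce_connectedComponent_supp _ ⟨v, hv⟩, ← e.degree_eq]
  rcases e ⟨v, hv⟩ with _ | _
  · rw [degree_completeBipartiteGraph_inl, Fintype.card_fin]
    exact ⟨hj, hjk⟩
  · rw [degree_completeBipartiteGraph_inr, Fintype.card_fin]
    exact ⟨le_rfl, hj.trans hjk⟩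

theorem jGraph_adj_lt_of_le {a b c : ℕ} {v u : Fin (a + b + c)} (hv : a + b ≤ v)
    (h : (jGraph a b c).Adj v u) : (u : ℕ) < a := by
  simp only [jGraph, fromRel_adj] at h
  omega

theorem not_hasStarFactor_jGraph {a b c k : ℕ} (h : k * a < c) :
    ¬ HasStarFactor k (jGraph a b c) := by
  intro hfac
  obtain ⟨H, hHG, hdeg⟩ := hfac.exists_le_forall_degree_mem_Icc
  set I : Finset (Fin (a + b + c)) := univ.map (Fin.natAddEmb (a + b))
  set S : Finset (Fin (a + b + c)) := {v | (v : ℕ) < a}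
  have hI : ∀ v ∈ I, ∃ s ∈ S, H.Adj v s := by
    simp only [I, mem_map, mem_univ, true_and, forall_exists_index]
    rintro _ i rfl
    obtain ⟨s, hs⟩ := (degree_pos_iff_exists_adj _ _).1 (hdeg (Fin.natAddEmb (a + b) i)).1
    exact ⟨s, by simpa [S] using jGraph_adj_lt_of_le (by simp) (hHG hs), hs⟩
  have hcount := H.card_le_mul_card_of_forall_exists_adj hI fun s _ ↦ (hdeg s).2
  simp only [I, S, card_map, card_univ, Fintype.card_fin, Fin.card_filter_val_lt] at hcount
  rw [min_eq_right (by omega)] at hcount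
  omega

theorem stmt16_general (δ k n : ℕ) :
    ¬ HasStarFactor k (jGraph δ (n - k * δ - δ - 1) (k * δ + 1)) :=
  not_hasStarFactor_jGraph (Nat.lt_succ_self _)

/-- For `k ≥ 2` and `n ≥ (k+1)δ+1`, the graph `K_δ ∨ (K_{n−kδ−δ−1} + (kδ+1)K_1)` has
no `{K_{1,1}, …, K_{1,k}}`-factor. -/
theorem stmt16 (δ k n : ℕ) (hk : 2 ≤ k) (hn : (k + 1) * δ + 1 ≤ n) :
    ¬ HasStarFactor k (jGraph δ (n - k * δ - δ - 1) (k * δ + 1)) :=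
  stmt16_general δ k n
end

section
/- Let s ≥ 1 and n ≥ 2s+2 be integers. Then the spectral radius of the graph K_s ∨ (K_{n−2s−1} + (s+1)K_1) is the largest root of the cubic polynomial P(x) = x³ − (n−s−3)x² − (s²+n−2)x − 2s³ + ns² − 4s² + ns − 2s. -/
open scoped Classical
open Finset

/-!
The vertices fall into three parts: the clique `K_s`, the clique `K_{n-2s-1}` and the `s+1`
isolated vertices. Up to the diagonal of the two cliques, the adjacency matrix is constant on
each pair of parts, so this partition is equitable. Eigenvectors of the `3 × 3` quotient matrix
lift to eigenvectors that are constant on the parts, and an eigenvector all of whose part sums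
vanish has eigenvalue `-1` or `0`. Hence every root of the characteristic polynomial `P` of the
quotient matrix is an eigenvalue of the graph, and every other eigenvalue is `-1` or `0`. Since
`P` is negative at `n - s - 2 > 0`, it has a positive root, so the spectral radius is the largest
root of `P`.
-/

namespace Matrix

open Module.End

section FiberSum

variable {ι κ K : Type*} [Fintype ι] [DecidableEq κ] [CommRing K]

def fiberSum (π : ι → κ) (u : ι → K) (k : κ) : K :=
  ∑ i with π i = k, u i

/-- The quotient matrix of `B.submatrix π π - diagonal (d ∘ π)` with respect to the partition
into the fibres of `π`: its `(k, l)` entry is the sum of the entries in any row of part `k`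
over the columns of part `l`. -/
def quotientMatrix [Fintype κ] (π : ι → κ) (B : Matrix κ κ K) (d : κ → K) : Matrix κ κ K :=
  B * diagonal (fun k ↦ (#{i | π i = k} : K)) - diagonal d

variable (π : ι → κ) (B : Matrix κ κ K) (d : κ → K)

lemma fiberSum_comp [Fintype κ] (g : κ → K) :
    fiberSum π (g ∘ π) = diagonal (fun k ↦ (#{i | π i = k} : K)) *ᵥ g := by
  ext k
  rw [fiberSum, sum_congr rfl fun i hi ↦ by rw [Function.comp_apply, (mem_filter.1 hi).2],
    sum_const, nsmul_eq_mul, mulVec_diagonal]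

lemma fiberSum_comp_mul (g : κ → K) (u : ι → K) :
    fiberSum π ((g ∘ π) * u) = g * fiberSum π u := by
  ext k
  simp only [fiberSum, Pi.mul_apply, mul_sum]
  exact sum_congr rfl fun i hi ↦ by rw [Function.comp_apply, (mem_filter.1 hi).2]

lemma submatrix_mulVec_eq_comp [Fintype κ] (u : ι → K) :
    B.submatrix π π *ᵥ u = (B *ᵥ fiberSum π u) ∘ π := by
  ext i
  simp only [mulVec, dotProduct, submatrix_apply, Function.comp_apply, fiberSum, mul_sum]
  rw [← sum_fiberwise univ π]
  exact sum_congr rfl fun k _ ↦ sum_congr rfl fun j hj ↦ by rw [(mem_filter.1 hj).2]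

lemma submatrix_sub_diagonal_mulVec [Fintype κ] [DecidableEq ι] (u : ι → K) :
    (B.submatrix π π - diagonal (d ∘ π)) *ᵥ u = (B *ᵥ fiberSum π u) ∘ π - (d ∘ π) * u := by
  rw [sub_mulVec, submatrix_mulVec_eq_comp]
  exact congrArg _ (funext (mulVec_diagonal _ _))

lemma submatrix_sub_diagonal_mulVec_comp [Fintype κ] [DecidableEq ι] (v : κ → K) :
    (B.submatrix π π - diagonal (d ∘ π)) *ᵥ (v ∘ π) = (quotientMatrix π B d *ᵥ v) ∘ π := by
  rw [submatrix_sub_diagonal_mulVec, fiberSum_comp, quotientMatrix, sub_mulVec, mulVec_mulVec]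
  ext i
  simp [mulVec_diagonal]

lemma fiberSum_submatrix_sub_diagonal_mulVec [Fintype κ] [DecidableEq ι] (u : ι → K) :
    fiberSum π ((B.submatrix π π - diagonal (d ∘ π)) *ᵥ u) =
      (quotientMatrix π Bᵀ d)ᵀ *ᵥ fiberSum π u := by
  have hsub : ∀ f g : ι → K, fiberSum π (f - g) = fiberSum π f - fiberSum π g := fun f g ↦
    funext fun k ↦ sum_sub_distrib ..
  rw [submatrix_sub_diagonal_mulVec, hsub, fiberSum_comp, fiberSum_comp_mul, quotientMatrix,
    transpose_sub, transpose_mul, transpose_transpose, diagonal_transpose, diagonal_transpose,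
    sub_mulVec, ← mulVec_mulVec]
  exact congrArg _ (funext fun k ↦ (mulVec_diagonal _ _ _).symm)

lemma submatrix_sub_diagonal_mulVec_of_fiberSum_eq_zero [Fintype κ] [DecidableEq ι] {u : ι → K}
    (hu : fiberSum π u = 0) :
    (B.submatrix π π - diagonal (d ∘ π)) *ᵥ u = -((d ∘ π) * u) := by
  rw [submatrix_sub_diagonal_mulVec, hu, mulVec_zero, Pi.zero_comp, zero_sub]

end FiberSum

section Eigenvalues

variable {κ K : Type*} [Fintype κ] [DecidableEq κ] [CommRing K]

lemma hasEigenvalue_toLin'_iff {M : Matrix κ κ K} {μ : K} :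
    HasEigenvalue (toLin' M) μ ↔ ∃ v ≠ 0, M *ᵥ v = μ • v := by
  simp only [hasEigenvalue_iff, Submodule.ne_bot_iff, mem_eigenspace_iff, toLin'_apply]
  exact exists_congr fun v ↦ and_comm

lemma hasEigenvalue_toLin'_transpose_iff [IsDomain K] {M : Matrix κ κ K} {μ : K} :
    HasEigenvalue (toLin' Mᵀ) μ ↔ HasEigenvalue (toLin' M) μ := by
  rw [hasEigenvalue_iff_isRoot_charpoly, hasEigenvalue_iff_isRoot_charpoly,
    charpoly_toLin', charpoly_toLin', charpoly_transpose]

variable {ι : Type*} [Fintype ι] [DecidableEq ι] {π : ι → κ} (B : Matrix κ κ K)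
  (d : κ → K) {μ : K}

theorem hasEigenvalue_submatrix_sub_diagonal_of_quotientMatrix (hπ : π.Surjective)
    (h : HasEigenvalue (toLin' (quotientMatrix π B d)) μ) :
    HasEigenvalue (toLin' (B.submatrix π π - diagonal (d ∘ π))) μ := by
  obtain ⟨v, hv0, hv⟩ := hasEigenvalue_toLin'_iff.1 h
  refine hasEigenvalue_toLin'_iff.2 ⟨v ∘ π, fun h0 ↦ hv0 (hπ.injective_comp_right h0), ?_⟩
  rw [submatrix_sub_diagonal_mulVec_comp, hv]
  rfl

theorem hasEigenvalue_quotientMatrix_or_of_hasEigenvalue_submatrix_sub_diagonal [IsDomain K]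
    (h : HasEigenvalue (toLin' (B.submatrix π π - diagonal (d ∘ π))) μ) :
    HasEigenvalue (toLin' (quotientMatrix π Bᵀ d)) μ ∨ ∃ k, μ = -d k := by
  obtain ⟨u, hu0, hu⟩ := hasEigenvalue_toLin'_iff.1 h
  by_cases hw : fiberSum π u = 0
  · obtain ⟨i, hi⟩ := Function.ne_iff.1 hu0
    have hui := congrFun (submatrix_sub_diagonal_mulVec_of_fiberSum_eq_zero π B d hw) i
    rw [hu] at hui
    refine Or.inr ⟨π i, mul_right_cancel₀ hi ?_⟩
    simpa [neg_mul] using hui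
  · refine Or.inl (hasEigenvalue_toLin'_transpose_iff.1 (hasEigenvalue_toLin'_iff.2 ⟨_, hw, ?_⟩))
    rw [← fiberSum_submatrix_sub_diagonal_mulVec, hu]
    ext k
    simp [fiberSum, mul_sum]

end Eigenvalues

end Matrix

open Matrix Module.End Polynomial

section JoinGraph

variable (a b c : ℕ)

lemma jGraph_adj {x y : Fin (a + b + c)} : (jGraph a b c).Adj x y ↔
    x ≠ y ∧ ((x : ℕ) < a ∨ (y : ℕ) < a ∨ ((x : ℕ) < a + b ∧ (y : ℕ) < a + b)) := by
  simp only [jGraph, SimpleGraph.fromRel_adj]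
  tauto

def jGraphPart (i : Fin (a + b + c)) : Fin 3 :=
  if (i : ℕ) < a then 0 else if (i : ℕ) < a + b then 1 else 2

lemma adjMatrix_jGraph : (jGraph a b c).adjMatrix ℝ =
    (!![1, 1, 1; 1, 1, 0; 1, 0, 0] : Matrix (Fin 3) (Fin 3) ℝ).submatrix
      (jGraphPart a b c) (jGraphPart a b c) - diagonal (![1, 1, 0] ∘ jGraphPart a b c) := by
  ext i j
  rw [SimpleGraph.adjMatrix_apply, jGraph_adj, Matrix.sub_apply, submatrix_apply, diagonal_apply]
  simp only [jGraphPart, Function.comp_apply]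
  split_ifs <;> simp_all

lemma card_jGraphPart (k : Fin 3) : #{i | jGraphPart a b c i = k} = ![a, b, c] k := by
  let p (m : ℕ) : Prop := (if m < a then 0 else if m < a + b then 1 else 2 : Fin 3) = k
  have hcard : #{i | jGraphPart a b c i = k} = #{m ∈ range (a + b + c) | p m} := by
    rw [card_filter, card_filter]
    exact Fin.sum_univ_eq_sum_range (fun m ↦ if p m then 1 else 0) _
  have hfiber :
      {m ∈ range (a + b + c) | p m} = Ico (![0, a, a + b] k) (![a, a + b, a + b + c] k) := by
    ext m
    fin_cases k <;> simp only [mem_filter, mem_range, mem_Ico, p, Fin.zero_eta, Fin.mk_one,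
      Fin.reduceFinMk, Matrix.cons_val, cons_val_zero, cons_val_one] <;> grind
  rw [hcard, hfiber, Nat.card_Ico]
  fin_cases k <;> simp

lemma jGraphPart_surjective {a b c : ℕ} (ha : 0 < a) (hb : 0 < b) (hc : 0 < c) :
    (jGraphPart a b c).Surjective := by
  intro k
  have hk : 0 < #{i | jGraphPart a b c i = k} := by
    rw [card_jGraphPart]
    fin_cases k <;> assumption
  obtain ⟨i, hi⟩ := card_pos.1 hk
  exact ⟨i, (mem_filter.1 hi).2⟩

def jGraphQuotient : Matrix (Fin 3) (Fin 3) ℝ :=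
  !![(a : ℝ) - 1, b, c; a, (b : ℝ) - 1, 0; a, 0, 0]

lemma quotientMatrix_jGraphPart :
    quotientMatrix (jGraphPart a b c) !![1, 1, 1; 1, 1, 0; 1, 0, 0] ![1, 1, 0] =
      jGraphQuotient a b c := by
  ext i j
  rw [quotientMatrix, Matrix.sub_apply, mul_diagonal, card_jGraphPart]
  fin_cases i <;> fin_cases j <;> simp [jGraphQuotient]

lemma eval_charpoly_jGraphQuotient (x : ℝ) :
    (jGraphQuotient a b c).charpoly.eval x =
      x * ((x - a + 1) * (x - b + 1) - a * b) - a * c * (x - b + 1) := by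
  rw [eval_charpoly, det_fin_three]
  simp only [jGraphQuotient, scalar_apply, Matrix.sub_apply, diagonal_apply_eq, of_apply,
    cons_val', cons_val_zero, cons_val_fin_one, cons_val_one, Matrix.cons_val, Fin.isValue,
    Fin.reduceEq, ne_eq, not_false_eq_true, diagonal_apply_ne]
  ring

theorem hasEigenvalue_adjMatrix_jGraph {a b c : ℕ} (ha : 0 < a) (hb : 0 < b) (hc : 0 < c) {x : ℝ}
    (hx : (jGraphQuotient a b c).charpoly.IsRoot x) :
    HasEigenvalue (toLin' ((jGraph a b c).adjMatrix ℝ)) x := by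
  rw [adjMatrix_jGraph]
  refine hasEigenvalue_submatrix_sub_diagonal_of_quotientMatrix _ _
    (jGraphPart_surjective ha hb hc) ?_
  rwa [quotientMatrix_jGraphPart, hasEigenvalue_iff_isRoot_charpoly, charpoly_toLin']

theorem eq_neg_one_or_eq_zero_or_isRoot_of_hasEigenvalue_adjMatrix_jGraph {x : ℝ}
    (hx : HasEigenvalue (toLin' ((jGraph a b c).adjMatrix ℝ)) x) :
    x = -1 ∨ x = 0 ∨ (jGraphQuotient a b c).charpoly.IsRoot x := by
  have hsymm : (!![1, 1, 1; 1, 1, 0; 1, 0, 0] : Matrix (Fin 3) (Fin 3) ℝ)ᵀ =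
      !![1, 1, 1; 1, 1, 0; 1, 0, 0] := by
    ext i j
    fin_cases i <;> fin_cases j <;> rfl
  rw [adjMatrix_jGraph] at hx
  rcases hasEigenvalue_quotientMatrix_or_of_hasEigenvalue_submatrix_sub_diagonal _ _ hx with
    h | ⟨k, rfl⟩
  · rw [hsymm, quotientMatrix_jGraphPart, hasEigenvalue_iff_isRoot_charpoly, charpoly_toLin'] at h
    exact Or.inr (Or.inr h)
  · fin_cases k <;> simp

theorem exists_isRoot_charpoly_jGraphQuotient {a c : ℕ} (ha : 0 < a) (hc : 0 < c) :
    ∃ x, (a + b - 1 : ℝ) < x ∧ (jGraphQuotient a b c).charpoly.IsRoot x := by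
  have hlo : (jGraphQuotient a b c).charpoly.eval ((a + b - 1 : ℝ)) < 0 := by
    have hac : (0 : ℝ) < a ^ 2 * c := by positivity
    rw [eval_charpoly_jGraphQuotient]
    linarith [show ((a + b - 1 : ℝ)) * ((a + b - 1 - a + 1) * (a + b - 1 - b + 1) - a * b) -
      a * c * (a + b - 1 - b + 1) = -(a ^ 2 * c) by ring]
  have hhi : 0 < (jGraphQuotient a b c).charpoly.eval ((a + b + c : ℝ)) := by
    rw [eval_charpoly_jGraphQuotient]
    ring_nf
    positivity
  obtain ⟨x, hx, hroot⟩ := intermediate_value_Ioo (by linarith)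
    (jGraphQuotient a b c).charpoly.continuous.continuousOn ⟨hlo, hhi⟩
  exact ⟨x, hx.1, hroot⟩

end JoinGraph

section SpectralRadius

variable {V : Type*} [Fintype V] [DecidableEq V] {G : SimpleGraph V} {μ : ℝ}

lemma le_specRad (h : HasEigenvalue (toLin' (G.adjMatrix ℝ)) μ) : μ ≤ specRad G :=
  le_csSup (finite_hasEigenvalue _).bddAbove h

lemma hasEigenvalue_specRad (h : HasEigenvalue (toLin' (G.adjMatrix ℝ)) μ) :
    HasEigenvalue (toLin' (G.adjMatrix ℝ)) (specRad G) :=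
  Set.Nonempty.csSup_mem ⟨μ, h⟩ (finite_hasEigenvalue _)

end SpectralRadius

/-- For `s ≥ 1` and `n ≥ 2s+2`, the spectral radius of `K_s ∨ (K_{n−2s−1} + (s+1)K_1)`
is the largest root of
`P(x) = x³ − (n−s−3)x² − (s²+n−2)x − 2s³ + ns² − 4s² + ns − 2s`. -/
theorem stmt18 (s n : ℕ) (hs : 1 ≤ s) (hn : 2 * s + 2 ≤ n) :
    ((specRad (jGraph s (n - 2 * s - 1) (s + 1))) ^ 3
        - ((n : ℝ) - s - 3) * (specRad (jGraph s (n - 2 * s - 1) (s + 1))) ^ 2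
        - ((s : ℝ) ^ 2 + (n : ℝ) - 2) * specRad (jGraph s (n - 2 * s - 1) (s + 1))
        - 2 * (s : ℝ) ^ 3 + (n : ℝ) * (s : ℝ) ^ 2 - 4 * (s : ℝ) ^ 2
        + (n : ℝ) * (s : ℝ) - 2 * (s : ℝ)) = 0 ∧
    ∀ x : ℝ,
      (x ^ 3 - ((n : ℝ) - s - 3) * x ^ 2 - ((s : ℝ) ^ 2 + (n : ℝ) - 2) * x
        - 2 * (s : ℝ) ^ 3 + (n : ℝ) * (s : ℝ) ^ 2 - 4 * (s : ℝ) ^ 2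
        + (n : ℝ) * (s : ℝ) - 2 * (s : ℝ)) = 0 →
      x ≤ specRad (jGraph s (n - 2 * s - 1) (s + 1)) := by
  set b := n - 2 * s - 1
  have hb : 0 < b := by omega
  have hn' : n = b + 2 * s + 1 := by omega
  have hP (x : ℝ) : x ^ 3 - ((n : ℝ) - s - 3) * x ^ 2 - ((s : ℝ) ^ 2 + (n : ℝ) - 2) * x
      - 2 * (s : ℝ) ^ 3 + (n : ℝ) * (s : ℝ) ^ 2 - 4 * (s : ℝ) ^ 2 + (n : ℝ) * (s : ℝ)
      - 2 * (s : ℝ) = (jGraphQuotient s b (s + 1)).charpoly.eval x := by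
    rw [eval_charpoly_jGraphQuotient, hn']
    push_cast
    ring
  simp only [hP, ← IsRoot.def]
  have hG {x : ℝ} (hx : (jGraphQuotient s b (s + 1)).charpoly.IsRoot x) :=
    hasEigenvalue_adjMatrix_jGraph hs hb s.succ_pos hx
  obtain ⟨x₀, hx₀, hroot⟩ := exists_isRoot_charpoly_jGraphQuotient b hs s.succ_pos
  have hρ := hasEigenvalue_specRad (hG hroot)
  have hρpos : 0 < specRad (jGraph s b (s + 1)) := by
    have hs' : (1 : ℝ) ≤ s := by exact_mod_cast hs
    linarith [le_specRad (hG hroot)]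
  refine ⟨?_, fun x hx ↦ le_specRad (hG hx)⟩
  rcases eq_neg_one_or_eq_zero_or_isRoot_of_hasEigenvalue_adjMatrix_jGraph _ _ _ hρ with
    hneg | hzero | hroot'
  · linarith
  · linarith
  · exact hroot'
end
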